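/- Every principal subautomaton of a state-finite retractable automaton contains exactly one minimal subautomaton. -/

import Mathlib

/-! If `M` and `N` are minimal subautomata of `R(a)`, retract `A` onto the subautomaton `M ∪ N`
by `φ`; say `φ a ∈ N`. Since `φ` fixes `M` and `M ⊆ R(a)`, every `m = δ(a, p) ∈ M` equals
`φ (δ(a, p)) = δ(φ a, p) ∈ N`, so `M ⊆ N` and minimality of `N` forces `M = N`. Existence of a
minimal subautomaton inside `R(a)` is finiteness. -/

universe u v

/-- The transition function extended to words (`X*`). -/
def deltaStar {A X : Type*} (δ : A → X → A) : A → List X → A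
  | a, [] => a
  | a, x :: p => deltaStar δ (δ a x) p

/-- `B` is a subautomaton of the automaton with transition `δ`. -/
def IsSubaut {A X : Type*} (δ : A → X → A) (B : Set A) : Prop :=
  B.Nonempty ∧ ∀ b ∈ B, ∀ x : X, δ b x ∈ B

/-- `φ` is a retract homomorphism of the automaton onto the subautomaton `B`:
a homomorphism of `A` onto `B` leaving the elements of `B` fixed. -/
def IsRetractHom {A X : Type*} (δ : A → X → A) (B : Set A) (φ : A → A) : Prop :=
  (∀ a, φ a ∈ B) ∧ (∀ b ∈ B, φ b = b) ∧ ∀ a x, φ (δ a x) = δ (φ a) x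

/-- `B` is a retract subautomaton. -/
def IsRetract {A X : Type*} (δ : A → X → A) (B : Set A) : Prop :=
  ∃ φ, IsRetractHom δ B φ

/-- An automaton is retractable if every subautomaton is retract. -/
def Retractable {A X : Type*} (δ : A → X → A) : Prop :=
  ∀ B, IsSubaut δ B → IsRetract δ B

/-- Retractability of the subautomaton on the carrier `D` (homomorphisms are
represented by functions on the ambient state set, restricted to `D`). -/
def RetractableOn {A X : Type*} (δ : A → X → A) (D : Set A) : Prop :=
  ∀ C ⊆ D, IsSubaut δ C →
    ∃ φ : A → A, (∀ a ∈ D, φ a ∈ C) ∧ (∀ c ∈ C, φ c = c) ∧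
      ∀ a ∈ D, ∀ x, φ (δ a x) = δ (φ a) x

/-- The principal subautomaton `R(a) = δ(a, X*)` generated by `a`. -/
def Rset {A X : Type*} (δ : A → X → A) (a : A) : Set A :=
  {b | ∃ p : List X, deltaStar δ a p = b}

/-- The `R`-class `R_a = {b : R(b) = R(a)}`. -/
def Rclass {A X : Type*} (δ : A → X → A) (a : A) : Set A :=
  {b | Rset δ b = Rset δ a}

/-- `R[a] = R(a) − R_a`. -/
def Rideal {A X : Type*} (δ : A → X → A) (a : A) : Set A :=
  Rset δ a \ Rclass δ a

/-- The Rees congruence induced by `B`: two states are related iff they are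
equal or both lie in `B`. -/
def reesRel {A : Type*} (B : Set A) (u v : A) : Prop :=
  u = v ∨ (u ∈ B ∧ v ∈ B)

/-- A minimal subautomaton: a subautomaton with no proper subautomaton. -/
def IsMinimalSubaut {A X : Type*} (δ : A → X → A) (B : Set A) : Prop :=
  IsSubaut δ B ∧ ∀ C ⊆ B, IsSubaut δ C → C = B

/-- The automaton has a kernel: a subautomaton contained in every subautomaton. -/
def HasKernel {A X : Type*} (δ : A → X → A) : Prop :=
  ∃ K, IsSubaut δ K ∧ ∀ B, IsSubaut δ B → K ⊆ B

/-- The principal factor `R{a}` (the Rees factor of `R(a)` modulo `R[a]`,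
described via the Rees congruence) is strongly connected. -/
def FactorSC {A X : Type*} (δ : A → X → A) (a : A) : Prop :=
  ∀ b ∈ Rset δ a, ∀ c ∈ Rset δ a,
    ∃ p : List X, p ≠ [] ∧ reesRel (Rideal δ a) (deltaStar δ b p) c

/-- The principal factor `R{a}` is a strongly trap-connected non-trivial
one-trap automaton (with trap the class of `t`). -/
def FactorSTC {A X : Type*} (δ : A → X → A) (a : A) : Prop :=
  ∃ t ∈ Rset δ a,
    (∀ x, reesRel (Rideal δ a) (δ t x) t) ∧
    (∃ b ∈ Rset δ a, ¬ reesRel (Rideal δ a) b t) ∧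
    (∀ b ∈ Rset δ a, (∀ x, reesRel (Rideal δ a) (δ b x) b) → reesRel (Rideal δ a) b t) ∧
    (∀ b ∈ Rset δ a, ∀ c ∈ Rset δ a, ¬ reesRel (Rideal δ a) b t →
      ∃ p : List X, p ≠ [] ∧ reesRel (Rideal δ a) (deltaStar δ b p) c)

/-- The principal factor `R{a}` is a strongly trapped non-trivial one-trap
automaton (with trap the class of `t`). -/
def FactorST {A X : Type*} (δ : A → X → A) (a : A) : Prop :=
  ∃ t ∈ Rset δ a,
    (∃ b ∈ Rset δ a, ¬ reesRel (Rideal δ a) b t) ∧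
    (∀ b ∈ Rset δ a, (∀ x, reesRel (Rideal δ a) (δ b x) b) → reesRel (Rideal δ a) b t) ∧
    (∀ b ∈ Rset δ a, ∀ x, reesRel (Rideal δ a) (δ b x) t)

/-- Semiconnected: every principal factor is strongly connected or strongly
trap-connected. -/
def Semiconnected {A X : Type*} (δ : A → X → A) : Prop :=
  ∀ a, FactorSC δ a ∨ FactorSTC δ a

/-- The subautomaton on `D` is semiconnected, via the characterization: for
every subautomaton `C ⊆ D` and every `a ∈ C` there are `b ∈ C` and a nonempty
word `p` with `a = δ(b,p)`. -/
def SemiconnectedOn {A X : Type*} (δ : A → X → A) (D : Set A) : Prop :=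
  ∀ C ⊆ D, IsSubaut δ C → ∀ a ∈ C, ∃ b ∈ C, ∃ p : List X, p ≠ [] ∧ deltaStar δ b p = a

/-- The automaton is a dilation of its subautomaton `B`. -/
def IsDilationOf {A X : Type*} (δ : A → X → A) (B : Set A) : Prop :=
  IsSubaut δ B ∧ ∃ φ : A → A, (∀ a, φ a ∈ B) ∧ (∀ b ∈ B, φ b = b) ∧
    ∀ a x, δ a x = δ (φ a) x

/-- Extension of a partial transition function (`none` = the removed trap)
to words. -/
def pStar {C X : Type*} (d : C → X → Option C) : C → List X → Option C
  | a, [] => some a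
  | a, x :: p => (d a x).bind fun b => pStar d b p

/-- The data of the Construction: a finite tree `(T, le)` with least element
`i0`; `C i` is the trap-removed part `A⁰ᵢ` of the automaton `Aᵢ`, with partial
transition `d i` (`none` means the trap); `A_{i0}` is strongly connected and
the other `Aᵢ` are non-trivial strongly trap-connected one-trap automata;
`Φ i j` are the composite partial homomorphisms along covering chains
(given here as coherent data whose covering components satisfy conditions
(ii) and (iii)); `δ'` is the glued transition function on `A = ⋃ A⁰ᵢ`. -/
def ConstructionSpec {X : Type*} (T : Type*) (le : T → T → Prop) (i0 : T)
    (C : T → Type*) (d : ∀ i, C i → X → Option (C i))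
    (Φ : ∀ i j, le j i → C i → C j)
    (δ' : (Σ i, C i) → X → Σ i, C i) : Prop :=
  (∀ i, le i i) ∧ (∀ i j, le i j → le j i → i = j) ∧
  (∀ i j k, le i j → le j k → le i k) ∧
  Finite T ∧
  (∀ S : Set T, S.Nonempty → (∃ u, ∀ i ∈ S, le i u) → ∃ g ∈ S, ∀ i ∈ S, le i g) ∧
  (∀ i, le i0 i) ∧
  Nonempty (C i0) ∧
  (∀ (a : C i0) (x : X), (d i0 a x).isSome) ∧
  (∀ a b : C i0, ∃ p : List X, p ≠ [] ∧ pStar (d i0) a p = some b) ∧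
  (∀ i, i ≠ i0 → Nonempty (C i) ∧
    (∀ a b : C i, ∃ p : List X, p ≠ [] ∧ pStar (d i) a p = some b) ∧
    (∀ a : C i, ∃ p : List X, p ≠ [] ∧ pStar (d i) a p = none)) ∧
  (∀ i (h : le i i) (a : C i), Φ i i h a = a) ∧
  (∀ i j k (h1 : le j i) (h2 : le k j) (h3 : le k i) (a : C i),
    Φ j k h2 (Φ i j h1 a) = Φ i k h3 a) ∧
  (∀ i j (h : le j i), i ≠ j → (∀ k, le j k → le k i → k = j ∨ k = i) →
    (∀ (a : C i) (x : X) (b : C i),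
      d i a x = some b → d j (Φ i j h a) x = some (Φ i j h b)) ∧
    ∃ (a : C i) (x : X), d i a x = none ∧ (d j (Φ i j h a) x).isSome) ∧
  (∀ i (a : C i) (x : X), ∃ (j : T) (hj : le j i) (b : C j),
    δ' ⟨i, a⟩ x = ⟨j, b⟩ ∧ d j (Φ i j hj a) x = some b ∧
    ∀ k (hk : le k i), (d k (Φ i k hk a) x).isSome → le k j)

section Automaton

variable {A X : Type*} {δ : A → X → A}

theorem deltaStar_append (a : A) (p q : List X) :
    deltaStar δ a (p ++ q) = deltaStar δ (deltaStar δ a p) q := by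
  induction p generalizing a with
  | nil => rfl
  | cons x p ih => exact ih (δ a x)

theorem apply_deltaStar_of_hom {φ : A → A} (hφ : ∀ a x, φ (δ a x) = δ (φ a) x) (a : A)
    (p : List X) : φ (deltaStar δ a p) = deltaStar δ (φ a) p := by
  induction p generalizing a with
  | nil => rfl
  | cons x p ih => simp only [deltaStar, ih, hφ]

theorem IsSubaut.deltaStar_mem {B : Set A} (hB : IsSubaut δ B) {b : A} (hb : b ∈ B)
    (p : List X) : deltaStar δ b p ∈ B := by
  induction p generalizing b with
  | nil => exact hb
  | cons x p ih => exact ih (hB.2 b hb x)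

theorem IsSubaut.Rset_subset {B : Set A} (hB : IsSubaut δ B) {b : A} (hb : b ∈ B) :
    Rset δ b ⊆ B := by
  rintro _ ⟨p, rfl⟩
  exact hB.deltaStar_mem hb p

theorem IsSubaut.union {B C : Set A} (hB : IsSubaut δ B) (hC : IsSubaut δ C) :
    IsSubaut δ (B ∪ C) :=
  ⟨hB.1.mono Set.subset_union_left, by
    rintro b (hb | hb) x
    exacts [Or.inl (hB.2 b hb x), Or.inr (hC.2 b hb x)]⟩

theorem isSubaut_Rset (a : A) : IsSubaut δ (Rset δ a) :=
  ⟨⟨a, [], rfl⟩, by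
    rintro _ ⟨p, rfl⟩ x
    exact ⟨p ++ [x], deltaStar_append a p [x]⟩⟩

theorem IsSubaut.exists_isMinimalSubaut_subset [Finite A] {B : Set A} (hB : IsSubaut δ B) :
    ∃ M ⊆ B, IsMinimalSubaut δ M := by
  obtain ⟨M, hMB, hM⟩ := Finite.exists_le_minimal (p := IsSubaut δ) hB
  exact ⟨M, hMB, hM.1, fun C hCM hC => hCM.antisymm (hM.2 hC hCM)⟩

theorem subset_Rset_apply_of_fixed {φ : A → A} (hφ : ∀ a x, φ (δ a x) = δ (φ a) x)
    {M : Set A} (hfix : ∀ m ∈ M, φ m = m) {a : A} (hMa : M ⊆ Rset δ a) :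
    M ⊆ Rset δ (φ a) := by
  intro m hm
  obtain ⟨p, rfl⟩ := hMa hm
  exact ⟨p, by rw [← apply_deltaStar_of_hom hφ, hfix _ hm]⟩

theorem IsMinimalSubaut.eq_of_fixed_of_apply_mem {φ : A → A} (hφ : ∀ a x, φ (δ a x) = δ (φ a) x)
    {M N : Set A} (hM : IsMinimalSubaut δ M) (hN : IsMinimalSubaut δ N)
    (hfix : ∀ m ∈ M, φ m = m) {a : A} (hMa : M ⊆ Rset δ a) (hφa : φ a ∈ N) : M = N :=
  hN.2 M ((subset_Rset_apply_of_fixed hφ hfix hMa).trans (hN.1.Rset_subset hφa)) hM.1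

end Automaton

theorem stmt_4_general {A X : Type*} [Finite A]
    (δ : A → X → A) (h : Retractable δ) (a : A) :
    ∃! M : Set A, IsMinimalSubaut δ M ∧ M ⊆ Rset δ a := by
  obtain ⟨M, hMa, hM⟩ := (isSubaut_Rset a).exists_isMinimalSubaut_subset
  refine ⟨M, ⟨hM, hMa⟩, fun N ⟨hN, hNa⟩ => ?_⟩
  obtain ⟨φ, hφB, hfix, hφ⟩ := h (M ∪ N) (hM.1.union hN.1)
  rcases hφB a with hφa | hφa
  · exact hN.eq_of_fixed_of_apply_mem hφ hM (fun n hn => hfix n (Or.inr hn)) hNa hφa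
  · exact (hM.eq_of_fixed_of_apply_mem hφ hN (fun m hm => hfix m (Or.inl hm)) hMa hφa).symm

/-- Lemma 3: every principal subautomaton of a state-finite
retractable automaton contains exactly one minimal subautomaton. -/
theorem stmt_4 {A X : Type*} [Finite A] [Nonempty A] [Nonempty X]
    (δ : A → X → A) (h : Retractable δ) (a : A) :
    ∃! M : Set A, IsMinimalSubaut δ M ∧ M ⊆ Rset δ a :=
  stmt_4_general δ h a
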